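/- If the Lanczos biconjugate A-orthonormalization procedure is run for m steps without breakdown, then W_m^T A² V_m = T_m; that is, the tridiagonal matrix T_m of recurrence coefficients is the projection of A onto the generated Krylov subspaces. -/
import Mathlib


open Matrix

/-- Data of the Lanczos biconjugate A-orthonormalization procedure: the matrix `A`,
the right and left Lanczos-type vectors `v j`, `w j`, the unnormalized vectors
`vhat j`, `what j`, and the recurrence scalars `alpha`, `beta`, `delta`. -/
structure LanczosData (n : ℕ) where
  A : Matrix (Fin n) (Fin n) ℝ
  v : ℕ → (Fin n → ℝ)
  w : ℕ → (Fin n → ℝ)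
  vhat : ℕ → (Fin n → ℝ)
  what : ℕ → (Fin n → ℝ)
  alpha : ℕ → ℝ
  beta : ℕ → ℝ
  delta : ℕ → ℝ

/-- The Lanczos biconjugate A-orthonormalization procedure runs `m` steps without
breakdown: `v 0 = w 0 = 0`, `beta 1 = delta 1 = 0`, `⟨w 1, A v 1⟩ = 1`, and for each
step `1 ≤ j ≤ m` the recurrence relations hold with
`⟨ŵ_{j+1}, A v̂_{j+1}⟩ ≠ 0` (equivalently `delta (j+1) ≠ 0`). -/
def LanczosData.Runs {n : ℕ} (L : LanczosData n) (m : ℕ) : Prop :=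
  L.v 0 = 0 ∧ L.w 0 = 0 ∧ L.beta 1 = 0 ∧ L.delta 1 = 0 ∧
  L.w 1 ⬝ᵥ (L.A *ᵥ L.v 1) = 1 ∧
  ∀ j : ℕ, 1 ≤ j → j ≤ m →
    (L.alpha j = L.w j ⬝ᵥ (L.A *ᵥ (L.A *ᵥ L.v j))) ∧
    (L.vhat (j + 1) = L.A *ᵥ L.v j - L.alpha j • L.v j - L.beta j • L.v (j - 1)) ∧
    (L.what (j + 1) = (L.A)ᵀ *ᵥ L.w j - L.alpha j • L.w j - L.delta j • L.w (j - 1)) ∧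
    (L.delta (j + 1) = Real.sqrt |L.what (j + 1) ⬝ᵥ (L.A *ᵥ L.vhat (j + 1))|) ∧
    (L.beta (j + 1) = (L.what (j + 1) ⬝ᵥ (L.A *ᵥ L.vhat (j + 1))) / L.delta (j + 1)) ∧
    (L.v (j + 1) = (L.delta (j + 1))⁻¹ • L.vhat (j + 1)) ∧
    (L.w (j + 1) = (L.beta (j + 1))⁻¹ • L.what (j + 1)) ∧
    (L.what (j + 1) ⬝ᵥ (L.A *ᵥ L.vhat (j + 1)) ≠ 0)

/-- `V m` is the `n × m` matrix with columns `v 1, …, v m`. -/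
def LanczosData.V {n : ℕ} (L : LanczosData n) (m : ℕ) : Matrix (Fin n) (Fin m) ℝ :=
  Matrix.of fun i k => L.v (k.1 + 1) i

/-- `W m` is the `n × m` matrix with columns `w 1, …, w m`. -/
def LanczosData.W {n : ℕ} (L : LanczosData n) (m : ℕ) : Matrix (Fin n) (Fin m) ℝ :=
  Matrix.of fun i k => L.w (k.1 + 1) i

/-- `T m` is the `m × m` tridiagonal matrix with diagonal `alpha 1, …, alpha m`,
subdiagonal `delta 2, …, delta m` and superdiagonal `beta 2, …, beta m`. -/
def LanczosData.T {n : ℕ} (L : LanczosData n) (m : ℕ) : Matrix (Fin m) (Fin m) ℝ :=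
  Matrix.of fun i j =>
    if i.1 = j.1 then L.alpha (i.1 + 1)
    else if i.1 = j.1 + 1 then L.delta (i.1 + 1)
    else if j.1 = i.1 + 1 then L.beta (j.1 + 1)
    else 0

namespace LanczosAux
variable {n m : ℕ}

noncomputable def s (L : LanczosData n) (i j : ℕ) : ℝ := L.w i ⬝ᵥ (L.A *ᵥ L.v j)

noncomputable def D (L : LanczosData n) (i j : ℕ) : ℝ :=
  L.w i ⬝ᵥ (L.A *ᵥ (L.A *ᵥ L.v j))

lemma delta_ne (L : LanczosData n) (h : L.Runs m) {j : ℕ} (h1 : 1 ≤ j) (h2 : j ≤ m) :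
    L.delta (j + 1) ≠ 0 := by
  obtain ⟨-, -, -, hd, -, -, -, hne⟩ := h.2.2.2.2.2 j h1 h2
  rw [hd]
  exact ne_of_gt (Real.sqrt_pos.mpr (abs_pos.mpr hne))

lemma beta_ne (L : LanczosData n) (h : L.Runs m) {j : ℕ} (h1 : 1 ≤ j) (h2 : j ≤ m) :
    L.beta (j + 1) ≠ 0 := by
  have hδ := delta_ne L h h1 h2
  obtain ⟨-, -, -, -, hb, -, -, hne⟩ := h.2.2.2.2.2 j h1 h2
  rw [hb]
  exact div_ne_zero hne hδ

lemma betamul (L : LanczosData n) (h : L.Runs m) {j : ℕ} (h1 : 1 ≤ j) (h2 : j ≤ m) :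
    L.beta (j + 1) * L.delta (j + 1) = L.what (j + 1) ⬝ᵥ (L.A *ᵥ L.vhat (j + 1)) := by
  have hδ := delta_ne L h h1 h2
  obtain ⟨-, -, -, -, hb, -, -, -⟩ := h.2.2.2.2.2 j h1 h2
  rw [hb, div_mul_cancel₀ _ hδ]

lemma Av_eq (L : LanczosData n) (h : L.Runs m) {j : ℕ} (h1 : 1 ≤ j) (h2 : j ≤ m) :
    L.A *ᵥ L.v j =
      L.delta (j + 1) • L.v (j + 1) + L.alpha j • L.v j + L.beta j • L.v (j - 1) := by
  have hδ := delta_ne L h h1 h2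
  obtain ⟨-, hvh, -, -, -, hv, -, -⟩ := h.2.2.2.2.2 j h1 h2
  rw [hv, smul_smul, mul_inv_cancel₀ hδ, one_smul, hvh]
  abel

lemma ATw_eq (L : LanczosData n) (h : L.Runs m) {j : ℕ} (h1 : 1 ≤ j) (h2 : j ≤ m) :
    (L.A)ᵀ *ᵥ L.w j =
      L.beta (j + 1) • L.w (j + 1) + L.alpha j • L.w j + L.delta j • L.w (j - 1) := by
  have hβ := beta_ne L h h1 h2
  obtain ⟨-, -, hwh, -, -, -, hw, -⟩ := h.2.2.2.2.2 j h1 h2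
  rw [hw, smul_smul, mul_inv_cancel₀ hβ, one_smul, hwh]
  abel

lemma crossW (L : LanczosData n) (h : L.Runs m) {i : ℕ} (h1 : 1 ≤ i) (h2 : i ≤ m)
    (j : ℕ) :
    D L i j = L.beta (i + 1) * s L (i + 1) j + L.alpha i * s L i j +
      L.delta i * s L (i - 1) j := by
  unfold D s
  rw [dotProduct_mulVec, ← mulVec_transpose, ATw_eq L h h1 h2]
  simp [add_dotProduct, smul_dotProduct, smul_eq_mul]

lemma crossV (L : LanczosData n) (h : L.Runs m) {j : ℕ} (h1 : 1 ≤ j) (h2 : j ≤ m)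
    (i : ℕ) :
    D L i j = L.delta (j + 1) * s L i (j + 1) + L.alpha j * s L i j +
      L.beta j * s L i (j - 1) := by
  unfold D s
  conv_lhs => rw [Av_eq L h h1 h2]
  simp [mulVec_add, mulVec_smul, dotProduct_add, dotProduct_smul, smul_eq_mul]

end LanczosAux
namespace LanczosAux
variable {n m : ℕ}

lemma expand_right (L : LanczosData n) (h : L.Runs m) {k : ℕ} (h1 : 1 ≤ k) (h2 : k ≤ m)
    (i : ℕ) :
    s L i (k + 1) = (L.delta (k + 1))⁻¹ *
      (D L i k - L.alpha k * s L i k - L.beta k * s L i (k - 1)) := by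
  obtain ⟨-, hvh, -, -, -, hv, -, -⟩ := h.2.2.2.2.2 k h1 h2
  simp only [s, D, hv, hvh, mulVec_smul, mulVec_sub, dotProduct_smul, dotProduct_sub,
    smul_eq_mul]

lemma expand_left (L : LanczosData n) (h : L.Runs m) {k : ℕ} (h1 : 1 ≤ k) (h2 : k ≤ m)
    (j : ℕ) :
    s L (k + 1) j = (L.beta (k + 1))⁻¹ *
      (D L k j - L.alpha k * s L k j - L.delta k * s L (k - 1) j) := by
  obtain ⟨-, -, hwh, -, -, -, hw, -⟩ := h.2.2.2.2.2 k h1 h2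
  have key : ((L.A)ᵀ *ᵥ L.w k) ⬝ᵥ (L.A *ᵥ L.v j) = D L k j := by
    unfold D
    rw [mulVec_transpose, ← dotProduct_mulVec]
  simp only [s, D, hw, hwh, sub_dotProduct, smul_dotProduct, smul_eq_mul]
  rw [key]
  rfl

lemma diag_one (L : LanczosData n) (h : L.Runs m) {k : ℕ} (h1 : 1 ≤ k) (h2 : k ≤ m) :
    s L (k + 1) (k + 1) = 1 := by
  have hδ := delta_ne L h h1 h2
  have hβ := beta_ne L h h1 h2
  have hbd := betamul L h h1 h2
  obtain ⟨-, -, -, -, -, hv, hw, -⟩ := h.2.2.2.2.2 k h1 h2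
  simp only [s, hv, hw, mulVec_smul, dotProduct_smul, smul_dotProduct, smul_eq_mul]
  rw [← hbd]
  field_simp

end LanczosAux
namespace LanczosAux
variable {n m : ℕ}

lemma biorth (L : LanczosData n) (h : L.Runs m) :
    ∀ k, k ≤ m + 1 → ∀ i j, i ≤ k → j ≤ k →
      s L i j = if i = j ∧ 1 ≤ i then 1 else 0 := by
  have s0l : ∀ j, s L 0 j = 0 := by intro j; simp [s, h.2.1]
  have s0r : ∀ i, s L i 0 = 0 := by intro i; simp [s, h.1]
  intro k
  induction k with
  | zero =>
    intro _ i j hi hj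
    interval_cases i
    interval_cases j
    simp [s0l]
  | succ k ih =>
    intro hk i j hi hj
    rcases Nat.eq_zero_or_pos k with hk0 | hk1
    · subst hk0
      interval_cases i <;> interval_cases j <;>
        simp [s0l, s0r, show s L 1 1 = 1 from h.2.2.2.2.1]
    have hkm : k ≤ m := by omega
    have IH : ∀ i j, i ≤ k → j ≤ k → s L i j = if i = j ∧ 1 ≤ i then 1 else 0 :=
      ih (by omega)
    have hD : D L k k = L.alpha k := ((h.2.2.2.2.2 k hk1 hkm).1).symm
    by_cases hik : i ≤ k
    · by_cases hjk : j ≤ k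
      · exact IH i j hik hjk
      · have hj' : j = k + 1 := by omega
        subst hj'
        rw [if_neg (by omega)]
        rcases Nat.eq_zero_or_pos i with h0 | h1
        · subst h0; exact s0l _
        rcases eq_or_lt_of_le hik with hik' | hik'
        · subst hik'
          rw [expand_right L h hk1 hkm, hD, IH i i le_rfl le_rfl,
            IH i (i - 1) le_rfl (by omega), if_pos ⟨rfl, h1⟩, if_neg (by omega)]
          ring
        · rw [expand_right L h hk1 hkm, crossW L h h1 (by omega),
            IH (i + 1) k (by omega) le_rfl, IH i k (by omega) le_rfl,
            IH (i - 1) k (by omega) le_rfl, IH i (k - 1) (by omega) (by omega)]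
          by_cases hik2 : i + 1 = k
          · rw [if_pos ⟨hik2, by omega⟩, if_neg (by omega), if_neg (by omega),
              if_pos (⟨by omega, h1⟩ : i = k - 1 ∧ 1 ≤ i), hik2]
            ring
          · rw [if_neg (by omega), if_neg (by omega), if_neg (by omega),
              if_neg (by omega)]
            ring
    · have hi' : i = k + 1 := by omega
      subst hi'
      by_cases hjk : j ≤ k
      · rw [if_neg (by omega)]
        rcases Nat.eq_zero_or_pos j with h0 | h1
        · subst h0; exact s0r _
        rcases eq_or_lt_of_le hjk with hjk' | hjk'
        · subst hjk'
          rw [expand_left L h hk1 hkm, hD, IH j j le_rfl le_rfl,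
            IH (j - 1) j (by omega) le_rfl, if_pos ⟨rfl, h1⟩, if_neg (by omega)]
          ring
        · rw [expand_left L h hk1 hkm, crossV L h h1 (by omega),
            IH k (j + 1) le_rfl (by omega), IH k j le_rfl (by omega),
            IH k (j - 1) le_rfl (by omega), IH (k - 1) j (by omega) (by omega)]
          by_cases hjk2 : j + 1 = k
          · rw [if_pos (⟨by omega, hk1⟩ : k = j + 1 ∧ 1 ≤ k), if_neg (by omega),
              if_neg (by omega), if_pos (⟨by omega, by omega⟩ : k - 1 = j ∧ 1 ≤ k - 1),
              ← hjk2]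
            ring
          · rw [if_neg (by omega), if_neg (by omega), if_neg (by omega),
              if_neg (by omega)]
            ring
      · have hj' : j = k + 1 := by omega
        subst hj'
        rw [diag_one L h hk1 hkm, if_pos ⟨rfl, by omega⟩]

end LanczosAux

open LanczosAux

/-- If the procedure is run for `m` steps without breakdown, then
`W_mᵀ A² V_m = T_m`: the tridiagonal matrix of recurrence coefficients is the
projection of `A` onto the generated Krylov subspaces. -/
theorem lanczos_WTA2V_eq_T {n m : ℕ} (L : LanczosData n) (hrun : L.Runs m) :
    (L.W m)ᵀ * (L.A * L.A) * L.V m = L.T m := by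
  ext i j
  have hentry : ((L.W m)ᵀ * (L.A * L.A) * L.V m) i j = D L (i.1 + 1) (j.1 + 1) := by
    have hD : D L (i.1 + 1) (j.1 + 1) =
        L.w (i.1 + 1) ⬝ᵥ ((L.A * L.A) *ᵥ L.v (j.1 + 1)) := by
      rw [D, mulVec_mulVec]
    rw [hD]
    set M := L.A * L.A with hM
    simp only [mul_apply, transpose_apply, LanczosData.W, LanczosData.V, of_apply,
      mulVec, dotProduct, Finset.sum_mul, Finset.mul_sum]
    rw [Finset.sum_comm]
    apply Finset.sum_congr rfl
    intro x _
    apply Finset.sum_congr rfl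
    intro y _
    ring
  rw [hentry, crossV L hrun (by omega) (by omega : j.1 + 1 ≤ m),
    biorth L hrun (m + 1) le_rfl (i.1 + 1) (j.1 + 1 + 1) (by omega) (by omega),
    biorth L hrun (m + 1) le_rfl (i.1 + 1) (j.1 + 1) (by omega) (by omega),
    biorth L hrun (m + 1) le_rfl (i.1 + 1) (j.1 + 1 - 1) (by omega) (by omega)]
  simp only [LanczosData.T, of_apply]
  by_cases h1 : i.1 = j.1
  · rw [if_pos h1, if_neg (by omega), if_pos (⟨by omega, by omega⟩ : _ ∧ _),
      if_neg (by omega), h1]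
    ring
  by_cases h2 : i.1 = j.1 + 1
  · rw [if_neg h1, if_pos h2, if_pos (⟨by omega, by omega⟩ : _ ∧ _),
      if_neg (by omega), if_neg (by omega)]
    have : j.1 + 1 + 1 = i.1 + 1 := by omega
    rw [this]
    ring
  by_cases h3 : j.1 = i.1 + 1
  · rw [if_neg h1, if_neg h2, if_pos h3, if_neg (by omega), if_neg (by omega),
      if_pos (⟨by omega, by omega⟩ : _ ∧ _)]
    ring
  · rw [if_neg h1, if_neg h2, if_neg h3, if_neg (by omega), if_neg (by omega),
      if_neg (by omega)]
    ring
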